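/- Let n ≥ 2, let α₁,…,αₙ > 0 be real, let β₁, β₂ > 0, and for z, w ∈ D^n set L^{(α)}(z,w) := ∏_{j=1}^n (1 − z_j w_j)^{−α_j} (principal branch); write α + 2e_i for α with α_i replaced by α_i + 2. Let N(z,w) ∈ M₃(ℂ) be the matrix with entries N₁₁ = L^{(α+2e₂)}, N₁₂ = 0, N₁₃ = α₁⁻¹∂_{w₁}L^{(α+2e₂)}, N₂₁ = 0, N₂₂ = β₁²·L^{(α+2e₁)}, N₂₃ = β₁²α₂⁻¹∂_{w₂}L^{(α+2e₁)}, N₃₁ = α₁⁻¹∂_{z₁}L^{(α+2e₂)}, N₃₂ = β₁²α₂⁻¹∂_{z₂}L^{(α+2e₁)}, N₃₃ = α₁⁻²∂_{z₁}∂_{w₁}L^{(α+2e₂)} + β₁²α₂⁻²∂_{z₂}∂_{w₂}L^{(α+2e₁)} + β₂²·L^{(α+2e₁+2e₂)}. Then for all z, w ∈ D^n, N(z,w) = D₂(z,w) · B(z,w) · D₂(z,w) · ∏_{j=1}^n (1 − z_j w_j)^{−α_j − 2δ_{1j} − 2δ_{2j}}, where D₂(z,w) = diag(1−z₁w₁,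 1−z₂w₂, 1), B(z,w) is the matrix with rows (1, 0, z₁), (0, β₁², β₁²z₂), (w₁, β₁²w₂, z₁w₁ + β₁²z₂w₂ + 1/α₁ + β₁²/α₂ + β₂²), and δ is the Kronecker delta. -/

import Mathlib

/-!
Each factor of `Lker a z w = ∏ⱼ (1 - zⱼwⱼ)^(-aⱼ)` depends on one coordinate pair only, so
`∂_{zᵢ}` multiplies the kernel by `aᵢwᵢ/(1 - zᵢwᵢ)`, `∂_{wᵢ}` by `aᵢzᵢ/(1 - zᵢwᵢ)`,
`∂_{zᵢ}∂_{wᵢ}` by `aᵢ(1 + aᵢzᵢwᵢ)/(1 - zᵢwᵢ)²`, and raising `aᵢ` by `2` multiplies it by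
`(1 - zᵢwᵢ)^(-2)`. After these substitutions every entry of both matrices is
`Lker a z w` times a rational function of `z₀, z₁, w₀, w₁`, and the entries agree by
direct computation.
-/

open Matrix

/-- Complex partial derivative in the `i`-th coordinate of the first variable. -/
noncomputable def pdz {n : ℕ} (f : (Fin n → ℂ) → (Fin n → ℂ) → ℂ) (i : Fin n) :
    (Fin n → ℂ) → (Fin n → ℂ) → ℂ :=
  fun z w => fderiv ℂ (fun z' => f z' w) z (Pi.single i 1)

/-- Complex partial derivative in the `j`-th coordinate of the second variable. -/
noncomputable def pdw {n : ℕ} (f : (Fin n → ℂ) → (Fin n → ℂ) → ℂ) (j : Fin n) :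
    (Fin n → ℂ) → (Fin n → ℂ) → ℂ :=
  fun z w => fderiv ℂ (fun w' => f z w') w (Pi.single j 1)

/-- The sesquiholomorphic scalar kernel `L^{(α)}(z,w) = ∏ⱼ (1 − zⱼwⱼ)^{−αⱼ}`
(principal branch). -/
noncomputable def Lker {n : ℕ} (a : Fin n → ℝ) (z w : Fin n → ℂ) : ℂ :=
  ∏ j, (1 - z j * w j) ^ (-(a j : ℂ))

lemma Lker_comm {n : ℕ} (a : Fin n → ℝ) (z w : Fin n → ℂ) : Lker a z w = Lker a w z := by
  simp only [Lker, mul_comm]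

lemma Lker_update {n : ℕ} (a : Fin n → ℝ) (i : Fin n) (x : ℝ) (z w : Fin n → ℂ)
    (h : 1 - z i * w i ≠ 0) :
    Lker (Function.update a i x) z w = (1 - z i * w i) ^ ((a i : ℂ) - x) * Lker a z w := by
  rw [Lker, Lker, ← Finset.mul_prod_erase _ _ (Finset.mem_univ i),
    ← Finset.mul_prod_erase _ _ (Finset.mem_univ i), Function.update_self,
    Finset.prod_congr rfl fun j hj => by rw [Function.update_of_ne (Finset.ne_of_mem_erase hj)],
    ← mul_assoc, ← Complex.cpow_add _ _ h]
  ring_nf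

lemma prod_cpow_sub_ite_eq_Lker {n : ℕ} (a : Fin n → ℝ) {i j : Fin n} (hij : i ≠ j)
    (z w : Fin n → ℂ) :
    ∏ k, (1 - z k * w k) ^ (-(a k : ℂ) - (if k = i then 2 else 0) - (if k = j then 2 else 0)) =
      Lker (Function.update (Function.update a i (a i + 2)) j (a j + 2)) z w := by
  refine Finset.prod_congr rfl fun k _ => ?_
  simp only [Function.update_apply]
  split_ifs <;> subst_vars <;> first | exact absurd rfl hij | push_cast; ring_nf

lemma one_sub_mul_mem_slitPlane {z w : ℂ} (hz : ‖z‖ < 1) (hw : ‖w‖ < 1) :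
    1 - z * w ∈ Complex.slitPlane := by
  have hzw : ‖-(z * w)‖ < 1 := by
    rw [norm_neg, norm_mul]
    exact mul_lt_one_of_nonneg_of_lt_one_left (norm_nonneg _) hz hw.le
  simpa [sub_eq_add_neg] using Complex.mem_slitPlane_of_norm_lt_one hzw

lemma hasDerivAt_one_sub_mul_const (w t : ℂ) : HasDerivAt (fun t => 1 - t * w) (-w) t := by
  simpa using (hasDerivAt_mul_const w).const_sub (1 : ℂ)

lemma hasFDerivAt_Lker_left {n : ℕ} (a : Fin n → ℝ) (z w : Fin n → ℂ)
    (h : ∀ k, 1 - z k * w k ∈ Complex.slitPlane) :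
    HasFDerivAt (fun z' => Lker a z' w)
      (∑ i, ((a i : ℂ) * w i * (1 - z i * w i)⁻¹ * Lker a z w) •
        ContinuousLinearMap.proj (R := ℂ) (φ := fun _ : Fin n => ℂ) i) z := by
  have hfactor : ∀ i ∈ Finset.univ, HasFDerivAt
      (fun z' : Fin n → ℂ => (1 - z' i * w i) ^ (-(a i : ℂ)))
      ((-(a i : ℂ) * (1 - z i * w i) ^ (-(a i : ℂ) - 1) * -w i) •
        ContinuousLinearMap.proj (R := ℂ) (φ := fun _ : Fin n => ℂ) i) z := fun i _ => by
    exact ((hasDerivAt_one_sub_mul_const (w i) (z i)).cpow_const (h i)).comp_hasFDerivAt z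
      (hasFDerivAt_apply (𝕜 := ℂ) i z)
  refine (HasFDerivAt.finsetProd hfactor).congr_fderiv ?_
  refine Finset.sum_congr rfl fun i _ => ?_
  rw [smul_smul, Lker, ← Finset.mul_prod_erase _ _ (Finset.mem_univ i),
    Complex.cpow_sub _ _ (Complex.slitPlane_ne_zero (h i)), Complex.cpow_one]
  field_simp [Complex.slitPlane_ne_zero (h i)]

lemma pdz_Lker {n : ℕ} (a : Fin n → ℝ) (i : Fin n) (z w : Fin n → ℂ)
    (h : ∀ k, 1 - z k * w k ∈ Complex.slitPlane) :
    pdz (Lker a) i z w = (a i : ℂ) * w i * (1 - z i * w i)⁻¹ * Lker a z w := by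
  simp [pdz, (hasFDerivAt_Lker_left a z w h).fderiv, Pi.single_apply]

lemma pdw_Lker {n : ℕ} (a : Fin n → ℝ) (i : Fin n) (z w : Fin n → ℂ)
    (h : ∀ k, 1 - z k * w k ∈ Complex.slitPlane) :
    pdw (Lker a) i z w = (a i : ℂ) * z i * (1 - z i * w i)⁻¹ * Lker a z w := by
  have hswap : pdw (Lker a) i z w = pdz (Lker a) i w z := by
    simp only [pdw, pdz, Lker_comm a z]
  rw [hswap, pdz_Lker a i w z fun k => mul_comm (w k) (z k) ▸ h k, Lker_comm a w,
    mul_comm (w i)]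

lemma pdz_pdw_Lker_self {n : ℕ} (a : Fin n → ℝ) (i : Fin n) (z w : Fin n → ℂ)
    (h : ∀ k, 1 - z k * w k ∈ Complex.slitPlane) :
    pdz (pdw (Lker a) i) i z w =
      (a i : ℂ) * (1 + a i * z i * w i) * ((1 - z i * w i) ^ 2)⁻¹ * Lker a z w := by
  have hne := Complex.slitPlane_ne_zero (h i)
  have hnear : ∀ᶠ z' in nhds z, ∀ k, 1 - z' k * w k ∈ Complex.slitPlane :=
    Filter.eventually_all.2 fun k =>
      (continuous_const.sub ((continuous_apply k).mul continuous_const)).continuousAt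
        |>.preimage_mem_nhds (Complex.isOpen_slitPlane.mem_nhds (h k))
  have hpdw : (fun z' => pdw (Lker a) i z' w) =ᶠ[nhds z]
      fun z' => (a i : ℂ) * z' i * (1 - z' i * w i)⁻¹ * Lker a z' w :=
    hnear.mono fun z' hz' => pdw_Lker a i z' w hz'
  have hcoeff : HasDerivAt (fun t : ℂ => (a i : ℂ) * t * (1 - t * w i)⁻¹)
      ((a i : ℂ) * 1 * (1 - z i * w i)⁻¹ + a i * z i * (-(-w i) / (1 - z i * w i) ^ 2))
      (z i) :=
    ((hasDerivAt_id (z i)).const_mul _).mul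
      ((hasDerivAt_one_sub_mul_const (w i) (z i)).inv hne)
  have hprod := (hcoeff.comp_hasFDerivAt z (hasFDerivAt_apply (𝕜 := ℂ) i z)).mul
    (hasFDerivAt_Lker_left a z w h)
  rw [pdz, hpdw.fderiv_eq, HasFDerivAt.fderiv (f := fun z' =>
    (a i : ℂ) * z' i * (1 - z' i * w i)⁻¹ * Lker a z' w) hprod]
  simp only [_root_.add_apply, _root_.smul_apply, _root_.sum_apply,
    ContinuousLinearMap.proj_apply, Function.comp_apply,
    Pi.single_apply, smul_eq_mul, mul_ite, mul_one, mul_zero, Finset.sum_ite_eq',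
    Finset.mem_univ, if_true]
  field_simp
  ring

theorem statement11_general {m : ℕ} (a : Fin (m + 2) → ℝ) (hpos : ∀ j, 0 < a j)
    (β₁ β₂ : ℝ)
    (z w : Fin (m + 2) → ℂ)
    (hz : ∀ k, ‖z k‖ < 1) (hw : ∀ k, ‖w k‖ < 1) :
    (!![Lker (Function.update a 1 (a 1 + 2)) z w,
        0,
        ((a 0 : ℂ))⁻¹ * pdw (Lker (Function.update a 1 (a 1 + 2))) 0 z w;
        0,
        (β₁ : ℂ) ^ 2 * Lker (Function.update a 0 (a 0 + 2)) z w,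
        (β₁ : ℂ) ^ 2 * ((a 1 : ℂ))⁻¹ * pdw (Lker (Function.update a 0 (a 0 + 2))) 1 z w;
        ((a 0 : ℂ))⁻¹ * pdz (Lker (Function.update a 1 (a 1 + 2))) 0 z w,
        (β₁ : ℂ) ^ 2 * ((a 1 : ℂ))⁻¹ * pdz (Lker (Function.update a 0 (a 0 + 2))) 1 z w,
        ((a 0 : ℂ))⁻¹ * ((a 0 : ℂ))⁻¹ *
            pdz (pdw (Lker (Function.update a 1 (a 1 + 2))) 0) 0 z w
          + (β₁ : ℂ) ^ 2 * ((a 1 : ℂ))⁻¹ * ((a 1 : ℂ))⁻¹ *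
            pdz (pdw (Lker (Function.update a 0 (a 0 + 2))) 1) 1 z w
          + (β₂ : ℂ) ^ 2 *
            Lker (Function.update (Function.update a 0 (a 0 + 2)) 1 (a 1 + 2)) z w] :
        Matrix (Fin 3) (Fin 3) ℂ) =
      (∏ j, (1 - z j * w j) ^
          (-(a j : ℂ) - (if j = 0 then 2 else 0) - (if j = 1 then 2 else 0))) •
        (Matrix.diagonal ![1 - z 0 * w 0, 1 - z 1 * w 1, 1] *
          !![1, 0, z 0;
             0, (β₁ : ℂ) ^ 2, (β₁ : ℂ) ^ 2 * z 1;
             w 0, (β₁ : ℂ) ^ 2 * w 1,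
               z 0 * w 0 + (β₁ : ℂ) ^ 2 * z 1 * w 1
                 + 1 / (a 0 : ℂ) + (β₁ : ℂ) ^ 2 / (a 1 : ℂ) + (β₂ : ℂ) ^ 2] *
          Matrix.diagonal ![1 - z 0 * w 0, 1 - z 1 * w 1, 1]) := by
  have hslit : ∀ k, 1 - z k * w k ∈ Complex.slitPlane := fun k =>
    one_sub_mul_mem_slitPlane (hz k) (hw k)
  have hu : ∀ k, 1 - z k * w k ≠ 0 := fun k => Complex.slitPlane_ne_zero (hslit k)
  have h01 : (0 : Fin (m + 2)) ≠ 1 := Fin.zero_ne_one'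
  have ha : ∀ k, (a k : ℂ) ≠ 0 := fun k => Complex.ofReal_ne_zero.2 (hpos k).ne'
  rw [prod_cpow_sub_ite_eq_Lker a h01]
  simp only [pdz_Lker _ _ z w hslit, pdw_Lker _ _ z w hslit, pdz_pdw_Lker_self _ _ z w hslit,
    Lker_update _ _ _ z w (hu _), Function.update_of_ne h01, Function.update_of_ne h01.symm]
  have hexp : ∀ b : ℝ, (b : ℂ) - ((b + 2 : ℝ) : ℂ) = -2 := fun b => by push_cast; ring
  simp only [hexp, Complex.cpow_neg, Complex.cpow_ofNat]
  ext i j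
  fin_cases i <;> fin_cases j <;>
    simp only [Fin.zero_eta, Fin.mk_one, Fin.reduceFinMk, Matrix.smul_apply, Matrix.mul_diagonal,
      Matrix.diagonal_mul, of_apply, cons_val', cons_val_zero, cons_val_one, cons_val,
      cons_val_fin_one, smul_eq_mul] <;>
    field_simp [hu 0, hu 1, ha 0, ha 1] <;>
    ring

/-- Closed form of the Type II kernel: the matrix `N(z,w)` built from
`L^{(α+2e₁)}`, `L^{(α+2e₂)}`, `L^{(α+2e₁+2e₂)}` and their partial derivatives equals
`(∏ⱼ (1 − zⱼwⱼ)^{−αⱼ−2δ_{1j}−2δ_{2j}}) • (D₂(z,w) B(z,w) D₂(z,w))`. -/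
theorem statement11 {m : ℕ} (a : Fin (m + 2) → ℝ) (hpos : ∀ j, 0 < a j)
    (β₁ β₂ : ℝ) (hβ₁ : 0 < β₁) (hβ₂ : 0 < β₂)
    (z w : Fin (m + 2) → ℂ)
    (hz : ∀ k, ‖z k‖ < 1) (hw : ∀ k, ‖w k‖ < 1) :
    (!![Lker (Function.update a 1 (a 1 + 2)) z w,
        0,
        ((a 0 : ℂ))⁻¹ * pdw (Lker (Function.update a 1 (a 1 + 2))) 0 z w;
        0,
        (β₁ : ℂ) ^ 2 * Lker (Function.update a 0 (a 0 + 2)) z w,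
        (β₁ : ℂ) ^ 2 * ((a 1 : ℂ))⁻¹ * pdw (Lker (Function.update a 0 (a 0 + 2))) 1 z w;
        ((a 0 : ℂ))⁻¹ * pdz (Lker (Function.update a 1 (a 1 + 2))) 0 z w,
        (β₁ : ℂ) ^ 2 * ((a 1 : ℂ))⁻¹ * pdz (Lker (Function.update a 0 (a 0 + 2))) 1 z w,
        ((a 0 : ℂ))⁻¹ * ((a 0 : ℂ))⁻¹ *
            pdz (pdw (Lker (Function.update a 1 (a 1 + 2))) 0) 0 z w
          + (β₁ : ℂ) ^ 2 * ((a 1 : ℂ))⁻¹ * ((a 1 : ℂ))⁻¹ *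
            pdz (pdw (Lker (Function.update a 0 (a 0 + 2))) 1) 1 z w
          + (β₂ : ℂ) ^ 2 *
            Lker (Function.update (Function.update a 0 (a 0 + 2)) 1 (a 1 + 2)) z w] :
        Matrix (Fin 3) (Fin 3) ℂ) =
      (∏ j, (1 - z j * w j) ^
          (-(a j : ℂ) - (if j = 0 then 2 else 0) - (if j = 1 then 2 else 0))) •
        (Matrix.diagonal ![1 - z 0 * w 0, 1 - z 1 * w 1, 1] *
          !![1, 0, z 0;
             0, (β₁ : ℂ) ^ 2, (β₁ : ℂ) ^ 2 * z 1;
             w 0, (β₁ : ℂ) ^ 2 * w 1,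
               z 0 * w 0 + (β₁ : ℂ) ^ 2 * z 1 * w 1
                 + 1 / (a 0 : ℂ) + (β₁ : ℂ) ^ 2 / (a 1 : ℂ) + (β₂ : ℂ) ^ 2] *
          Matrix.diagonal ![1 - z 0 * w 0, 1 - z 1 * w 1, 1]) :=
  statement11_general a hpos β₁ β₂ z w hz hw
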